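/- Let G be a group, A a division ring equipped with an action of G by ring automorphisms, and V a left A-module equipped with an additive G-action satisfying g•(a·v) = (g•a)·(g•v) for all g ∈ G, a ∈ A, v ∈ V. Let χ : G → Aut_A(V) be a group homomorphism into the group of A-linear automorphisms of V, and set V_χ = {w ∈ V | g•w = χ(g)(w) for all g ∈ G}. Then V_χ is a module over the fixed division ring A^G, and every family of elements of V_χ that is left linearly independent over A^G remains left linearly independent over A; equivalently, the natural map A ⊗_{A^G} V_χ → V is injective. In particular (taking χ to be trivial), the natural map A ⊗_{A^G} V^G → V is injective. -/

import Mathlib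

/-!
Let `∑ cᵢ wᵢ = 0` be a relation with `cᵢ₀ = 1` among twisted invariants `wᵢ ∈ V_χ`.  On `V_χ`
we have `ρ g (a • w) = χ g ((g • a) • w)`, so applying `ρ g` and the injectivity of `χ g` show
that `∑ (g • cᵢ) wᵢ = 0` is again a relation; the difference of the two is a relation supported
away from `i₀`.  By induction on the support it vanishes, so all `cᵢ` lie in `A^G`, and
`A^G`-independence forces `cᵢ₀ = 0`, a contradiction.
-/

/-- The group of additive automorphisms of `V` under composition, `g * h = g ∘ h`. -/
instance addEquivSelfMulGroup (V : Type*) [Add V] : Group (V ≃+ V) where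
  mul g h := AddEquiv.trans h g
  one := AddEquiv.refl _
  inv := AddEquiv.symm
  mul_assoc _ _ _ := rfl
  one_mul _ := rfl
  mul_one _ := rfl
  inv_mul_cancel := AddEquiv.self_trans_symm

section StableRelations

variable {G ι A V : Type*} [DivisionRing A] [AddCommGroup V] [Module A V]
  (σ : G → A →+* A) {w : ι → V}

theorem forall_eq_zero_of_sum_smul_eq_zero_of_stable
    (hstable : ∀ g (s : Finset ι) (c : ι → A),
      ∑ i ∈ s, c i • w i = 0 → ∑ i ∈ s, σ g (c i) • w i = 0)
    (hfix : ∀ (s : Finset ι) (c : ι → A), (∀ i ∈ s, ∀ g, σ g (c i) = c i) →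
      ∑ i ∈ s, c i • w i = 0 → ∀ i ∈ s, c i = 0)
    (s : Finset ι) (c : ι → A) (hc : ∑ i ∈ s, c i • w i = 0) : ∀ i ∈ s, c i = 0 := by
  classical
  induction s using Finset.strongInduction generalizing c with
  | H s ih =>
    intro i₀ hi₀
    by_contra hne
    set d : ι → A := fun i => (c i₀)⁻¹ * c i
    have hd : ∑ i ∈ s, d i • w i = 0 := by
      simp only [d, mul_smul, ← Finset.smul_sum, hc, smul_zero]
    have hd₀ : d i₀ = 1 := inv_mul_cancel₀ hne
    have hd_fixed : ∀ i ∈ s, ∀ g, σ g (d i) = d i := by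
      intro i hi g
      obtain rfl | hi' := eq_or_ne i i₀
      · rw [hd₀, map_one]
      have hdiff : ∑ j ∈ s.erase i₀, (σ g (d j) - d j) • w j = 0 := by
        rw [Finset.sum_erase s (a := i₀) (f := fun j => (σ g (d j) - d j) • w j)
          (by rw [hd₀, map_one, sub_self, zero_smul])]
        simp only [sub_smul, Finset.sum_sub_distrib, hstable g s d hd, hd, sub_zero]
      exact sub_eq_zero.mp <|
        ih _ (Finset.erase_ssubset hi₀) _ hdiff i (Finset.mem_erase.mpr ⟨hi', hi⟩)
    exact one_ne_zero (hd₀ ▸ hfix s d hd_fixed hd i₀ hi₀)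

theorem linearIndependent_of_stable_relations
    (hstable : ∀ g (s : Finset ι) (c : ι → A),
      ∑ i ∈ s, c i • w i = 0 → ∑ i ∈ s, σ g (c i) • w i = 0)
    (hfix : ∀ (s : Finset ι) (c : ι → A), (∀ i, ∀ g, σ g (c i) = c i) →
      ∑ i ∈ s, c i • w i = 0 → ∀ i ∈ s, c i = 0) :
    LinearIndependent A w := by
  classical
  have hfix_on : ∀ (s : Finset ι) (c : ι → A), (∀ i ∈ s, ∀ g, σ g (c i) = c i) →
      ∑ i ∈ s, c i • w i = 0 → ∀ i ∈ s, c i = 0 := by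
    intro s c hc hsum i hi
    have hpiece : ∀ i, ∀ g, σ g (s.piecewise c 0 i) = s.piecewise c 0 i := by
      intro i g
      by_cases hi : i ∈ s <;> simp [hi, hc i]
    have hsum' : ∑ i ∈ s, s.piecewise c 0 i • w i = 0 := by
      rw [← hsum]
      exact Finset.sum_congr rfl fun i hi => by rw [s.piecewise_eq_of_mem _ _ hi]
    simpa [hi] using hfix s _ hpiece hsum' i hi
  exact linearIndependent_iff'.mpr
    (forall_eq_zero_of_sum_smul_eq_zero_of_stable σ hstable hfix_on)

end StableRelations

section TwistedInvariants

variable {G A V : Type*} [Group G] [DivisionRing A] [AddCommGroup V] [Module A V]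
  {act : G →* (A ≃+* A)} {ρ : G →* (V ≃+ V)} {χ : G →* (V ≃ₗ[A] V)}

theorem apply_smul_of_twisted (hcompat : ∀ (g : G) (a : A) (v : V), ρ g (a • v) = act g a • ρ g v)
    {w : V} (hw : ∀ g, ρ g w = χ g w) (g : G) (a : A) :
    ρ g (a • w) = χ g (act g a • w) := by
  rw [hcompat, hw, map_smul]

theorem sum_act_smul_eq_zero_of_twisted
    (hcompat : ∀ (g : G) (a : A) (v : V), ρ g (a • v) = act g a • ρ g v)
    {ι : Type*} {w : ι → V} (hw : ∀ i g, ρ g (w i) = χ g (w i)) (g : G) {s : Finset ι}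
    {c : ι → A} (hc : ∑ i ∈ s, c i • w i = 0) : ∑ i ∈ s, act g (c i) • w i = 0 := by
  have h : ρ g (∑ i ∈ s, c i • w i) = χ g (∑ i ∈ s, act g (c i) • w i) := by
    simp only [map_sum, apply_smul_of_twisted hcompat (hw _)]
  rw [hc, map_zero, eq_comm] at h
  exact (χ g).map_eq_zero_iff.mp h

end TwistedInvariants

/-- **Linear independence of twisted invariants (Lemma `inject`).**  `A` is a
division ring with an action `act` of a group `G` by ring automorphisms, `V` is
a left `A`-module with a compatible additive `G`-action `ρ`
(`hcompat : ρ g (a • v) = act g a • ρ g v`), and `χ : G → Aut_A(V)` is a second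
`G`-action by `A`-linear automorphisms.  Let
`V_χ = {w | ∀ g, ρ g w = χ g w}`.  Then `V_χ` is a module over the fixed
division ring `A^G` (it contains `0` and is closed under addition and under
scalars from `A^G`), and every family of elements of `V_χ` which is left
linearly independent over `A^G` remains left linearly independent over `A`. -/
theorem twisted_invariants_linearIndependent
    (G : Type) [Group G] (A : Type) [DivisionRing A]
    (act : G →* (A ≃+* A))
    (V : Type) [AddCommGroup V] [Module A V]
    (ρ : G →* (V ≃+ V))
    (hcompat : ∀ (g : G) (a : A) (v : V), ρ g (a • v) = act g a • ρ g v)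
    (χ : G →* (V ≃ₗ[A] V)) :
    -- `V_χ` is an `A^G`-submodule of `V`
    ((0 : V) ∈ {w : V | ∀ g : G, ρ g w = χ g w} ∧
     (∀ w₁ w₂ : V, w₁ ∈ {w : V | ∀ g : G, ρ g w = χ g w} →
        w₂ ∈ {w : V | ∀ g : G, ρ g w = χ g w} →
        w₁ + w₂ ∈ {w : V | ∀ g : G, ρ g w = χ g w}) ∧
     (∀ a : A, (∀ g : G, act g a = a) →
        ∀ w ∈ {w : V | ∀ g : G, ρ g w = χ g w},
          a • w ∈ {w : V | ∀ g : G, ρ g w = χ g w})) ∧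
    -- `A^G`-linearly independent families in `V_χ` are `A`-linearly independent;
    -- equivalently, the natural map `A ⊗_{A^G} V_χ → V` is injective
    (∀ (ι : Type) (w : ι → V),
      (∀ i : ι, w i ∈ {w : V | ∀ g : G, ρ g w = χ g w}) →
      (∀ (s : Finset ι) (c : ι → A), (∀ i : ι, ∀ g : G, act g (c i) = c i) →
        ∑ i ∈ s, c i • w i = 0 → ∀ i ∈ s, c i = 0) →
      LinearIndependent A w) := by
  refine ⟨⟨fun g => by simp, fun w₁ w₂ h₁ h₂ g => by simp [h₁ g, h₂ g], ?_⟩, ?_⟩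
  · intro a ha w hw g
    rw [apply_smul_of_twisted hcompat hw, ha]
  · intro ι w hw hfix
    exact linearIndependent_of_stable_relations (fun g => (act g : A →+* A))
      (fun g _ _ => sum_act_smul_eq_zero_of_twisted hcompat hw g) hfix
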